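/- arXiv:1504.04529 — 2 statements merged into one kernel-verified Lean document; each statement's English description precedes it below -/
import Mathlib

section
/- Let Q be a forest poset. Then the rewrite relation →_Q on syntax trees on Q is confluent: whenever a syntax tree t rewrites in zero or more steps to r₁ and to r₂, there exists a syntax tree t' to which both r₁ and r₂ rewrite in zero or more steps. -/
/-!
By Newman's lemma it suffices to show that `Rew` terminates and is locally confluent.
Termination is witnessed by a weight on trees built from the ranks `#(Set.Iic a)` of the labels.
Every critical overlap of two rule instances lives on a tree with three internal nodes, and each
of its two reducts is again a three-node tree whose labels are pairwise comparable, by the forest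
axiom. Such a tree rewrites to the right comb labelled by the minimum of its labels, and the
forest axiom (through `pmin_assoc` and `pmin_right_comm`) makes that minimum the same for both
reducts.
-/

open scoped Classical

/-- The minimum of two comparable elements of a poset. -/
noncomputable def pmin {Q : Type*} [PartialOrder Q] (a b : Q) : Q :=
  if a ≤ b then a else b

/-- A forest poset: for all `a b c`, if `a ≼ c` and `b ≼ c` then `a` and `b` are
comparable. -/
def IsForestPoset (Q : Type*) [PartialOrder Q] : Prop :=
  ∀ a b c : Q, a ≤ c → b ≤ c → a ≤ b ∨ b ≤ a

/-- Syntax trees on `Q`: planar binary trees whose internal nodes are labeled by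
elements of `Q`. -/
inductive STree (Q : Type*) where
  | leaf : STree Q
  | node : Q → STree Q → STree Q → STree Q

/-- The one-step rewrite relation `→_Q` on syntax trees. -/
inductive Rew {Q : Type*} [PartialOrder Q] : STree Q → STree Q → Prop
  | rule1 (a b : Q) (h : a ≤ b ∨ b ≤ a) (t1 t2 t3 : STree Q) :
      Rew (.node a (.node b t1 t2) t3)
        (.node (pmin a b) t1 (.node (pmin a b) t2 t3))
  | rule2 (a b : Q) (h : a ≤ b ∨ b ≤ a) (hne : a ≠ b) (t1 t2 t3 : STree Q) :
      Rew (.node a t1 (.node b t2 t3))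
        (.node (pmin a b) t1 (.node (pmin a b) t2 t3))
  | left (a : Q) {t t' : STree Q} (s : STree Q) :
      Rew t t' → Rew (.node a t s) (.node a t' s)
  | right (a : Q) (s : STree Q) {t t' : STree Q} :
      Rew t t' → Rew (.node a s t) (.node a s t')

theorem Relation.join_reflTransGen_of_locallyConfluent {α : Type*} {r : α → α → Prop}
    (hwf : WellFounded (flip r)) (hlc : ∀ {a b c}, r a b → r a c → Join (ReflTransGen r) b c)
    {a b c : α} (hab : ReflTransGen r a b) (hac : ReflTransGen r a c) :
    Join (ReflTransGen r) b c := by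
  induction a using hwf.induction generalizing b c with
  | _ a ih =>
    rcases hab.cases_head with rfl | ⟨b', hab', hb'b⟩
    · exact ⟨c, hac, .refl⟩
    rcases hac.cases_head with rfl | ⟨c', hac', hc'c⟩
    · exact ⟨b, .refl, hab⟩
    obtain ⟨d, hb'd, hc'd⟩ := hlc hab' hac'
    obtain ⟨e, hbe, hde⟩ := ih b' hab' hb'b hb'd
    obtain ⟨f, hef, hcf⟩ := ih c' hac' (hc'd.trans hde) hc'c
    exact ⟨f, hbe.trans hef, hcf⟩

section Pmin

variable {Q : Type*} [PartialOrder Q] {a b c : Q}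

theorem pmin_eq_left (h : a ≤ b) : pmin a b = a := if_pos h

theorem pmin_eq_right (h : b ≤ a) : pmin a b = b := by
  unfold pmin
  split_ifs with h'
  exacts [le_antisymm h' h, rfl]

theorem pmin_eq_or (a b : Q) : pmin a b = a ∨ pmin a b = b := by
  unfold pmin
  split_ifs <;> simp

theorem pmin_le_right (a b : Q) : pmin a b ≤ b := by
  unfold pmin
  split_ifs with h
  exacts [h, le_rfl]

theorem pmin_le_left (h : a ≤ b ∨ b ≤ a) : pmin a b ≤ a :=
  h.elim (fun h ↦ (pmin_eq_left h).le) fun h ↦ (pmin_eq_right h).trans_le h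

@[simp]
theorem pmin_self (a : Q) : pmin a a = a :=
  pmin_eq_left le_rfl

@[simp]
theorem pmin_right_idem (a b : Q) : pmin (pmin a b) b = pmin a b :=
  pmin_eq_left (pmin_le_right a b)

theorem pmin_comm (h : a ≤ b ∨ b ≤ a) : pmin a b = pmin b a := by
  rcases h with h | h
  · rw [pmin_eq_left h, pmin_eq_right h]
  · rw [pmin_eq_right h, pmin_eq_left h]

theorem pmin_assoc (hab : a ≤ b ∨ b ≤ a) (hbc : b ≤ c ∨ c ≤ b) :
    pmin (pmin a b) c = pmin a (pmin b c) := by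
  rcases hab with hab | hab <;> rcases hbc with hbc | hbc
  · rw [pmin_eq_left hab, pmin_eq_left hbc, pmin_eq_left hab, pmin_eq_left (hab.trans hbc)]
  · rw [pmin_eq_left hab, pmin_eq_right hbc]
  · rw [pmin_eq_right hab, pmin_eq_left hbc, pmin_eq_right hab]
  · rw [pmin_eq_right hab, pmin_eq_right hbc, pmin_eq_right (hbc.trans hab)]

theorem comparable_pmin (hac : a ≤ c ∨ c ≤ a) (hbc : b ≤ c ∨ c ≤ b) :
    pmin a b ≤ c ∨ c ≤ pmin a b := by
  rcases pmin_eq_or a b with h | h <;> rwa [h]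

theorem IsForestPoset.comparable_of_le (hQ : IsForestPoset Q) (hab : a ≤ b)
    (hbc : b ≤ c ∨ c ≤ b) : a ≤ c ∨ c ≤ a :=
  hbc.elim (fun hbc ↦ .inl (hab.trans hbc)) fun hcb ↦ hQ a c b hab hcb

theorem IsForestPoset.pmin_right_comm (hQ : IsForestPoset Q) (hab : a ≤ b ∨ b ≤ a)
    (hac : a ≤ c ∨ c ≤ a) : pmin (pmin a b) c = pmin (pmin a c) b := by
  rcases hab with hab | hba <;> rcases hac with hac | hca
  · rw [pmin_eq_left hab, pmin_eq_left hac, pmin_eq_left hab]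
  · rw [pmin_eq_left hab, pmin_eq_right hca, pmin_eq_left (hca.trans hab)]
  · rw [pmin_eq_right hba, pmin_eq_left hac, pmin_eq_left (hba.trans hac), pmin_eq_right hba]
  · rw [pmin_eq_right hba, pmin_eq_right hca, pmin_comm (hQ b c a hba hca)]

end Pmin

section Termination

open STree

variable {Q : Type*} [PartialOrder Q]

/-- Rule 1 halves the coefficient of its leftmost subtree; rule 2 keeps all coefficients and
lowers the rank of one label. -/
noncomputable def STree.weight : STree Q → ℕ
  | leaf => 1
  | node a l r => (Set.Iic a).ncard + 2 * l.weight + r.weight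

theorem STree.one_le_weight (t : STree Q) : 1 ≤ t.weight := by
  induction t with
  | leaf => rfl
  | node _ _ _ _ ihr => simp only [weight]; omega

variable [Finite Q]

theorem ncard_Iic_mono {a b : Q} (h : a ≤ b) : (Set.Iic a).ncard ≤ (Set.Iic b).ncard :=
  Set.ncard_le_ncard (Set.Iic_subset_Iic.2 h)

theorem ncard_Iic_strictMono {a b : Q} (h : a < b) : (Set.Iic a).ncard < (Set.Iic b).ncard :=
  Set.ncard_lt_ncard (Set.Iic_ssubset_Iic.2 h)

theorem Rew.weight_lt {t t' : STree Q} (h : Rew t t') : t'.weight < t.weight := by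
  induction h with
  | rule1 a b hab t₁ =>
    have := t₁.one_le_weight
    have := ncard_Iic_mono (pmin_le_left hab)
    have := ncard_Iic_mono (pmin_le_right a b)
    simp only [weight]
    omega
  | rule2 a b hab hne =>
    have : 2 * (Set.Iic (pmin a b)).ncard < (Set.Iic a).ncard + (Set.Iic b).ncard := by
      rcases hab with hab | hba
      · have := ncard_Iic_strictMono (hab.lt_of_ne hne)
        rw [pmin_eq_left hab]
        omega
      · have := ncard_Iic_strictMono (hba.lt_of_ne hne.symm)
        rw [pmin_eq_right hba]
        omega
    simp only [weight]
    omega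
  | left | right => simp only [weight]; omega

theorem Rew.wellFounded_flip : WellFounded (flip (@Rew Q _)) :=
  (measure weight).wf.mono fun _ _ h ↦ Rew.weight_lt h

end Termination

namespace Rew

open STree Relation

variable {Q : Type*} [PartialOrder Q] {a b c x y z : Q}
  {t t' t₁ t₂ t₃ t₄ u₁ u₂ u₃ u₄ : STree Q}

local infix:50 " ↠ " => ReflTransGen Rew

theorem reflTransGen_left (a : Q) (s : STree Q) (h : t ↠ t') : node a t s ↠ node a t' s :=
  h.lift (node a · s) fun _ _ ↦ Rew.left a s

theorem reflTransGen_right (a : Q) (s : STree Q) (h : t ↠ t') : node a s t ↠ node a s t' :=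
  h.lift (node a s ·) fun _ _ ↦ Rew.right a s

theorem reflTransGen_rule2 (h : a ≤ b ∨ b ≤ a) (t₁ t₂ t₃ : STree Q) :
    node a t₁ (node b t₂ t₃) ↠ node (pmin a b) t₁ (node (pmin a b) t₂ t₃) := by
  by_cases hab : a = b
  · subst hab
    rw [pmin_self]
  · exact .single (rule2 a b h hab t₁ t₂ t₃)

def _root_.STree.comb (m : Q) (u₁ u₂ u₃ u₄ : STree Q) : STree Q :=
  node m u₁ (node m u₂ (node m u₃ u₄))

theorem reflTransGen_comb_rightRight (hxy : x ≤ y ∨ y ≤ x) (hxz : x ≤ z ∨ z ≤ x)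
    (hyz : y ≤ z ∨ z ≤ y) (u₁ u₂ u₃ u₄ : STree Q) :
    node x u₁ (node y u₂ (node z u₃ u₄)) ↠ comb (pmin (pmin x y) z) u₁ u₂ u₃ u₄ := by
  set p := pmin x y
  set m := pmin p z
  have hpz : p ≤ z ∨ z ≤ p := comparable_pmin hxz hyz
  have hmp : m ≤ p := pmin_le_left hpz
  calc node x u₁ (node y u₂ (node z u₃ u₄))
      _ ↠ node p u₁ (node p u₂ (node z u₃ u₄)) := reflTransGen_rule2 hxy ..
      _ ↠ node p u₁ (node m u₂ (node m u₃ u₄)) := reflTransGen_right _ _ (reflTransGen_rule2 hpz ..)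
      _ ↠ comb m u₁ u₂ u₃ u₄ := by
        simpa only [pmin_eq_right hmp, comb] using reflTransGen_rule2 (.inr hmp) u₁ u₂ _

theorem reflTransGen_comb_rightLeft (hxy : x ≤ y ∨ y ≤ x) (hxz : x ≤ z ∨ z ≤ x)
    (hyz : y ≤ z ∨ z ≤ y) (u₁ u₂ u₃ u₄ : STree Q) :
    node x u₁ (node y (node z u₂ u₃) u₄) ↠ comb (pmin (pmin x y) z) u₁ u₂ u₃ u₄ := by
  have hxp := (comparable_pmin hxy.symm hxz.symm).symm
  have := reflTransGen_comb_rightRight hxp hxp (.inl le_rfl) u₁ u₂ u₃ u₄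
  rw [pmin_right_idem, ← pmin_assoc hxy hyz] at this
  exact .head (right x u₁ (rule1 y z hyz u₂ u₃ u₄)) this

theorem reflTransGen_comb_balanced (hxy : x ≤ y ∨ y ≤ x) (hxz : x ≤ z ∨ z ≤ x)
    (hyz : y ≤ z ∨ z ≤ y) (u₁ u₂ u₃ u₄ : STree Q) :
    node x (node y u₁ u₂) (node z u₃ u₄) ↠ comb (pmin (pmin x y) z) u₁ u₂ u₃ u₄ := by
  have hpz := comparable_pmin hxz hyz
  have := reflTransGen_comb_rightRight (.inl le_rfl) hpz hpz u₁ u₂ u₃ u₄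
  rw [pmin_self] at this
  exact .head (rule1 x y hxy u₁ u₂ _) this

theorem reflTransGen_comb_leftRight (hxy : x ≤ y ∨ y ≤ x) (hxz : x ≤ z ∨ z ≤ x)
    (hyz : y ≤ z ∨ z ≤ y) (u₁ u₂ u₃ u₄ : STree Q) :
    node x (node y u₁ (node z u₂ u₃)) u₄ ↠ comb (pmin (pmin x y) z) u₁ u₂ u₃ u₄ := by
  have hpz := comparable_pmin hxz hyz
  have := reflTransGen_comb_rightLeft (.inl le_rfl) hpz hpz u₁ u₂ u₃ u₄
  rw [pmin_self] at this
  exact .head (rule1 x y hxy u₁ _ _) this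

variable (hQ : IsForestPoset Q)
include hQ

theorem join_rule1_rule2 (hab : a ≤ b ∨ b ≤ a) (hac : a ≤ c ∨ c ≤ a) :
    Join (· ↠ ·) (node (pmin a b) t₁ (node (pmin a b) t₂ (node c t₃ t₄)))
      (node (pmin a c) (node b t₁ t₂) (node (pmin a c) t₃ t₄)) := by
  have hmc := hQ.comparable_of_le (pmin_le_left hab) hac
  have hnb := hQ.comparable_of_le (pmin_le_left hac) hab
  refine ⟨comb (pmin (pmin a b) c) t₁ t₂ t₃ t₄, ?_, ?_⟩
  · simpa only [pmin_self] using
      reflTransGen_comb_rightRight (.inl le_rfl) hmc hmc t₁ t₂ t₃ t₄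
  · have := reflTransGen_comb_balanced hnb (.inl le_rfl) hnb.symm t₁ t₂ t₃ t₄
    rwa [pmin_eq_left (pmin_le_left hnb), ← hQ.pmin_right_comm hab hac] at this

theorem join_rule1_leftRule1 (hab : a ≤ b ∨ b ≤ a) (hbc : b ≤ c ∨ c ≤ b) :
    Join (· ↠ ·) (node (pmin a b) (node c u₁ u₂) (node (pmin a b) t₂ t₃))
      (node a (node (pmin b c) u₁ (node (pmin b c) u₂ t₂)) t₃) := by
  have hmc := hQ.comparable_of_le (pmin_le_right a b) hbc
  have han := (hQ.comparable_of_le (pmin_le_left hbc) hab.symm).symm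
  refine ⟨comb (pmin (pmin a b) c) u₁ u₂ t₂ t₃, ?_, ?_⟩
  · have := reflTransGen_comb_balanced hmc (.inl le_rfl) hmc.symm u₁ u₂ t₂ t₃
    rwa [pmin_eq_left (pmin_le_left hmc)] at this
  · simpa only [pmin_right_idem, pmin_assoc hab hbc] using
      reflTransGen_comb_leftRight han han (.inl le_rfl) u₁ u₂ t₂ t₃

theorem join_rule1_leftRule2 (hab : a ≤ b ∨ b ≤ a) (hbc : b ≤ c ∨ c ≤ b) :
    Join (· ↠ ·) (node (pmin a b) t₁ (node (pmin a b) (node c u₂ u₃) t₃))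
      (node a (node (pmin b c) t₁ (node (pmin b c) u₂ u₃)) t₃) := by
  have hmc := hQ.comparable_of_le (pmin_le_right a b) hbc
  have han := (hQ.comparable_of_le (pmin_le_left hbc) hab.symm).symm
  refine ⟨comb (pmin (pmin a b) c) t₁ u₂ u₃ t₃, ?_, ?_⟩
  · simpa only [pmin_self] using
      reflTransGen_comb_rightLeft (.inl le_rfl) hmc hmc t₁ u₂ u₃ t₃
  · simpa only [pmin_right_idem, pmin_assoc hab hbc] using
      reflTransGen_comb_leftRight han han (.inl le_rfl) t₁ u₂ u₃ t₃

theorem join_rule2_rightRule1 (hab : a ≤ b ∨ b ≤ a) (hbc : b ≤ c ∨ c ≤ b) :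
    Join (· ↠ ·) (node (pmin a b) t₁ (node (pmin a b) (node c u₂ u₃) t₃))
      (node a t₁ (node (pmin b c) u₂ (node (pmin b c) u₃ t₃))) := by
  have hmc := hQ.comparable_of_le (pmin_le_right a b) hbc
  have han := (hQ.comparable_of_le (pmin_le_left hbc) hab.symm).symm
  refine ⟨comb (pmin (pmin a b) c) t₁ u₂ u₃ t₃, ?_, ?_⟩
  · simpa only [pmin_self] using
      reflTransGen_comb_rightLeft (.inl le_rfl) hmc hmc t₁ u₂ u₃ t₃
  · simpa only [pmin_right_idem, pmin_assoc hab hbc] using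
      reflTransGen_comb_rightRight han han (.inl le_rfl) t₁ u₂ u₃ t₃

theorem join_rule2_rightRule2 (hab : a ≤ b ∨ b ≤ a) (hbc : b ≤ c ∨ c ≤ b) :
    Join (· ↠ ·) (node (pmin a b) t₁ (node (pmin a b) t₂ (node c u₃ u₄)))
      (node a t₁ (node (pmin b c) t₂ (node (pmin b c) u₃ u₄))) := by
  have hmc := hQ.comparable_of_le (pmin_le_right a b) hbc
  have han := (hQ.comparable_of_le (pmin_le_left hbc) hab.symm).symm
  refine ⟨comb (pmin (pmin a b) c) t₁ t₂ u₃ u₄, ?_, ?_⟩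
  · simpa only [pmin_self] using
      reflTransGen_comb_rightRight (.inl le_rfl) hmc hmc t₁ t₂ u₃ u₄
  · simpa only [pmin_right_idem, pmin_assoc hab hbc] using
      reflTransGen_comb_rightRight han han (.inl le_rfl) t₁ t₂ u₃ u₄

theorem join_of_rule1 {r : STree Q} (hab : a ≤ b ∨ b ≤ a)
    (h : Rew (node a (node b t₁ t₂) t₃) r) :
    Join (· ↠ ·) (node (pmin a b) t₁ (node (pmin a b) t₂ t₃)) r := by
  cases h with
  | rule1 => exact ⟨_, .refl, .refl⟩
  | rule2 _ _ hac => exact join_rule1_rule2 hQ hab hac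
  | left _ _ h =>
    cases h with
    | rule1 _ _ hbc => exact join_rule1_leftRule1 hQ hab hbc
    | rule2 _ _ hbc => exact join_rule1_leftRule2 hQ hab hbc
    | left _ _ h => exact ⟨_, .single (left _ _ h), .single (rule1 a b hab _ t₂ t₃)⟩
    | right _ _ h => exact ⟨_, .single (right _ _ (left _ _ h)), .single (rule1 a b hab t₁ _ t₃)⟩
  | right _ _ h => exact ⟨_, .single (right _ _ (right _ _ h)), .single (rule1 a b hab t₁ t₂ _)⟩

theorem join_of_rule2 {r : STree Q} (hab : a ≤ b ∨ b ≤ a) (hne : a ≠ b)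
    (h : Rew (node a t₁ (node b t₂ t₃)) r) :
    Join (· ↠ ·) (node (pmin a b) t₁ (node (pmin a b) t₂ t₃)) r := by
  cases h with
  | rule1 _ _ hac => exact symm_of _ (join_rule1_rule2 hQ hac hab)
  | rule2 => exact ⟨_, .refl, .refl⟩
  | left _ _ h => exact ⟨_, .single (left _ _ h), .single (rule2 a b hab hne _ t₂ t₃)⟩
  | right _ _ h =>
    cases h with
    | rule1 _ _ hbc => exact join_rule2_rightRule1 hQ hab hbc
    | rule2 _ _ hbc => exact join_rule2_rightRule2 hQ hab hbc
    | left _ _ h =>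
      exact ⟨_, .single (right _ _ (left _ _ h)), .single (rule2 a b hab hne t₁ _ t₃)⟩
    | right _ _ h =>
      exact ⟨_, .single (right _ _ (right _ _ h)), .single (rule2 a b hab hne t₁ t₂ _)⟩

theorem locallyConfluent {r₁ r₂ : STree Q} (h₁ : Rew t r₁) (h₂ : Rew t r₂) :
    Join (· ↠ ·) r₁ r₂ := by
  induction h₁ generalizing r₂ with
  | rule1 _ _ hab => exact join_of_rule1 hQ hab h₂
  | rule2 _ _ hab hne => exact join_of_rule2 hQ hab hne h₂
  | left a s h₁ ih =>
    cases h₂ with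
    | rule1 _ _ hab => exact symm_of _ (join_of_rule1 hQ hab (left a s h₁))
    | rule2 _ _ hab hne => exact symm_of _ (join_of_rule2 hQ hab hne (left a _ h₁))
    | left _ _ h₂ =>
      obtain ⟨u, hu₁, hu₂⟩ := ih h₂
      exact ⟨node a u s, reflTransGen_left a s hu₁, reflTransGen_left a s hu₂⟩
    | right _ _ h₂ => exact ⟨_, .single (right _ _ h₂), .single (left _ _ h₁)⟩
  | right a s h₁ ih =>
    cases h₂ with
    | rule1 _ _ hab => exact symm_of _ (join_of_rule1 hQ hab (right a _ h₁))
    | rule2 _ _ hab hne => exact symm_of _ (join_of_rule2 hQ hab hne (right a s h₁))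
    | left _ _ h₂ => exact ⟨_, .single (left _ _ h₂), .single (right _ _ h₁)⟩
    | right _ _ h₂ =>
      obtain ⟨u, hu₁, hu₂⟩ := ih h₂
      exact ⟨node a s u, reflTransGen_right a s hu₁, reflTransGen_right a s hu₂⟩

end Rew

/-- For a forest poset `Q`, the rewrite relation `→_Q` on syntax trees is confluent:
whenever `t` rewrites in zero or more steps to `r₁` and to `r₂`, there is a tree `t'` to
which both `r₁` and `r₂` rewrite in zero or more steps. -/
theorem rew_confluent {Q : Type*} [Fintype Q] [PartialOrder Q]
    (hQ : IsForestPoset Q) (t r₁ r₂ : STree Q)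
    (h₁ : Relation.ReflTransGen Rew t r₁) (h₂ : Relation.ReflTransGen Rew t r₂) :
    ∃ t' : STree Q, Relation.ReflTransGen Rew r₁ t' ∧ Relation.ReflTransGen Rew r₂ t' :=
  Relation.join_reflTransGen_of_locallyConfluent Rew.wellFounded_flip
    (Rew.locallyConfluent hQ) h₁ h₂
end

section
/- Let K be a field of characteristic zero and let Q be a finite set carrying two partial orders ≼ and ≼', both of which are forest posets, such that for all distinct a, b ∈ Q, a and b are comparable for ≼ if and only if they are incomparable for ≼'. For b ∈ Q define w_b := Σ_{a ∈ Q, a ≼' b} Σ_{c ∈ Q, a ≼ c} ε_c ∈ K^Q, with (ε_c) the standard basis of K^Q, and define the linear map Φ : V → V by Φ(e(x,i,y)) := Σ_{c,d ∈ Q} (w_x)_c·(w_y)_d·e(c,i,d). Then Φ is a linear automorphism of V and Φ maps the relation space R_{(Q,≼')} bijectively onto the annihilator R_{(Q,≼)}^⊥ of R_{(Q,≼)} with respect to the bilinear form ⟨·,·⟩. (This is the presentation-level form of the theorem that for a thin forest poset Q, the map ⋆_b ↦ Σ_{a ≼' b} Σ_{a ≼ c} Ō_c extends to an operad isomorphism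 from As(Q^⊥) to the Koszul dual As(Q)^!.) -/
open scoped Classical

/-- The minimum of two comparable elements with respect to an explicit partial order. -/
noncomputable def pminP {Q : Type*} (P : PartialOrder Q) (a b : Q) : Q :=
  if P.le a b then a else b

/-- The standard basis vector `e(a,i,b)` of `V = (Q × {1,2} × Q) → K` (with `0 : Fin 2`
encoding position `1` and `1 : Fin 2` encoding position `2`). -/
noncomputable def e (K : Type*) [Field K] {Q : Type*} (a : Q) (i : Fin 2) (b : Q) :
    (Q × Fin 2 × Q) → K :=
  fun p => if p = (a, i, b) then 1 else 0

/-- The space of relations `R_(Q,≼)` for an explicit partial order `≼` on `Q`: the span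
of `e(a,1,b) − e(a↑b,2,a↑b)` and `e(a↑b,1,a↑b) − e(a,2,b)` for `≼`-comparable `a, b`. -/
noncomputable def relSpaceP (K : Type*) [Field K] {Q : Type*} (P : PartialOrder Q) :
    Submodule K ((Q × Fin 2 × Q) → K) :=
  Submodule.span K
    {x | ∃ a b : Q, (P.le a b ∨ P.le b a) ∧
      (x = e K a 0 b - e K (pminP P a b) 1 (pminP P a b) ∨
       x = e K (pminP P a b) 0 (pminP P a b) - e K a 1 b)}

/-- The bilinear form on `V` with `⟨e(a,i,b), e(a',i',b')⟩ = 1` if `(a,b) = (a',b')` and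
`i = i' = 1`, `= −1` if `(a,b) = (a',b')` and `i = i' = 2`, and `0` otherwise. -/
noncomputable def bform {K : Type*} [Field K] {Q : Type*} [Fintype Q]
    (u w : (Q × Fin 2 × Q) → K) : K :=
  ∑ a : Q, ∑ b : Q, (u (a, 0, b) * w (a, 0, b) - u (a, 1, b) * w (a, 1, b))

lemma bform_add {K : Type*} [Field K] {Q : Type*} [Fintype Q]
    (r u v : (Q × Fin 2 × Q) → K) :
    bform r (u + v) = bform r u + bform r v := by
  unfold bform
  rw [← Finset.sum_add_distrib]
  refine Finset.sum_congr rfl fun a _ => ?_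
  rw [← Finset.sum_add_distrib]
  refine Finset.sum_congr rfl fun b _ => ?_
  simp only [Pi.add_apply]
  ring

lemma bform_smul {K : Type*} [Field K] {Q : Type*} [Fintype Q]
    (c : K) (r v : (Q × Fin 2 × Q) → K) :
    bform r (c • v) = c * bform r v := by
  unfold bform
  rw [Finset.mul_sum]
  refine Finset.sum_congr rfl fun a _ => ?_
  rw [Finset.mul_sum]
  refine Finset.sum_congr rfl fun b _ => ?_
  simp only [Pi.smul_apply, smul_eq_mul]
  ring

/-- The annihilator `S^⊥ = {v ∈ V : ⟨r, v⟩ = 0 for all r ∈ S}` of a subspace `S` of `V`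
with respect to the bilinear form `⟨·,·⟩`. -/
noncomputable def annih (K : Type*) [Field K] (Q : Type*) [Fintype Q]
    (S : Submodule K ((Q × Fin 2 × Q) → K)) : Submodule K ((Q × Fin 2 × Q) → K) where
  carrier := {v | ∀ r ∈ S, bform r v = 0}
  add_mem' := by
    intro u v hu hv r hr
    rw [bform_add, hu r hr, hv r hr, add_zero]
  zero_mem' := by
    intro r hr
    simp [bform]
  smul_mem' := by
    intro c v hv r hr
    rw [bform_smul, hv r hr, mul_zero]


/-- A forest poset structure for an explicit partial order: whenever `a ≼ c` and
`b ≼ c`, the elements `a` and `b` are `≼`-comparable. -/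
def IsForestOrder {Q : Type*} (P : PartialOrder Q) : Prop :=
  ∀ a b c : Q, P.le a c → P.le b c → P.le a b ∨ P.le b a

/-- The vector `w_b = Σ_{a ≼' b} Σ_{a ≼ c} ε_c ∈ K^Q`. -/
noncomputable def wvec (K : Type*) [Field K] {Q : Type*} [Fintype Q]
    (P P' : PartialOrder Q) (b : Q) : Q → K :=
  fun c => ∑ a : Q, if P'.le a b ∧ P.le a c then 1 else 0

/-- The linear map `Φ : V → V` determined by
`Φ(e(x,i,y)) = Σ_{c,d} (w_x)_c·(w_y)_d·e(c,i,d)`. -/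
noncomputable def Phi (K : Type*) [Field K] {Q : Type*} [Fintype Q]
    (P P' : PartialOrder Q) (v : (Q × Fin 2 × Q) → K) : (Q × Fin 2 × Q) → K :=
  fun p => ∑ x : Q, ∑ y : Q,
    v (x, p.2.1, y) * wvec K P P' x p.1 * wvec K P P' y p.2.2

/-!
The matrix `W = (w_x(c))` factors as `Z'ᵀ Z` through the zeta matrices of `≼'` and `≼`, which
are invertible (unitriangular along any linear extension); on the slot `i`, `Φ` is
`X ↦ Wᵀ X W`, hence bijective.

Since no two distinct elements are comparable for both orders, the forest property makes the
index `t` with `t ≼' x`, `t ≼ c` unique when it exists, so `w_x(c) ∈ {0, 1}`; for `≼`-comparable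
`a, b` and `≼'`-comparable `x, y` the product `w_x(a) w_y(b)` then only depends on `a↑b` and
`x↑y`. This is exactly what makes `Φ` of a generator of `R_(Q,≼')` orthogonal to every generator
of `R_(Q,≼)`.

Equality `Φ(R_(Q,≼')) = R_(Q,≼)^⊥` is a dimension count: a vector of `R_(Q,≼)^⊥` is determined
by its coordinates `(a,i,b)` with `a, b` `≼`-incomparable together with the diagonal coordinates
`(m,1,m)` (index `0 : Fin 2`), and `R_(Q,≼')` surjects onto these coordinates because
`≼`-incomparable pairs are `≼'`-comparable.
-/

open Matrix

section Orders

variable {Q : Type*}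

theorem pminP_self (P : PartialOrder Q) (a : Q) : pminP P a a = a := by
  simp [pminP]

theorem le_pminP_iff {P : PartialOrder Q} {a b t : Q} (hab : P.le a b ∨ P.le b a) :
    P.le t (pminP P a b) ↔ P.le t a ∧ P.le t b := by
  unfold pminP
  split_ifs with hle
  · exact ⟨fun ht => ⟨ht, P.le_trans _ _ _ ht hle⟩, And.left⟩
  · exact ⟨fun ht => ⟨P.le_trans _ _ _ ht (hab.resolve_left hle), ht⟩, And.right⟩

theorem IsForestOrder.comparable_of_le_of_le {P : PartialOrder Q} (hP : IsForestOrder P)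
    {a b s t : Q} (hab : P.le a b ∨ P.le b a) (hs : P.le s a) (ht : P.le t b) :
    P.le s t ∨ P.le t s := by
  rcases hab with hab | hba
  · exact hP s t b (P.le_trans _ _ _ hs hab) ht
  · exact hP s t a hs (P.le_trans _ _ _ ht hba)

end Orders

section Restriction

variable {K : Type*} [Field K] {Q : Type*}

def annihCoords (P : PartialOrder Q) : Set (Q × Fin 2 × Q) :=
  {p | ¬(P.le p.1 p.2.2 ∨ P.le p.2.2 p.1) ∨ (p.1 = p.2.2 ∧ p.2.1 = 0)}

theorem funLeft_val_e_of_mem {S : Set (Q × Fin 2 × Q)} {a : Q} {i : Fin 2} {b : Q}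
    (h : (a, i, b) ∈ S) :
    LinearMap.funLeft K K (Subtype.val : S → _) (e K a i b) = Pi.single ⟨(a, i, b), h⟩ 1 := by
  funext p
  simp [LinearMap.funLeft_apply, e, Pi.single_apply, ← Subtype.val_inj]

theorem funLeft_val_e_of_not_mem {S : Set (Q × Fin 2 × Q)} {a : Q} {i : Fin 2} {b : Q}
    (h : (a, i, b) ∉ S) : LinearMap.funLeft K K (Subtype.val : S → _) (e K a i b) = 0 := by
  funext p
  simp only [LinearMap.funLeft_apply, e, Pi.zero_apply]
  exact if_neg fun (hp : p.1 = (a, i, b)) => h (hp ▸ p.2)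

end Restriction

noncomputable def zetaMatrix (K : Type*) [Field K] {Q : Type*} (P : PartialOrder Q) :
    Matrix Q Q K :=
  Matrix.of fun a c => if P.le a c then 1 else 0

section Zeta

variable {K : Type*} [Field K] {Q : Type*} [Fintype Q]

theorem isUnit_zetaMatrix (P : PartialOrder Q) : IsUnit (zetaMatrix K P) := by
  let _ := P
  rw [← vecMul_injective_iff_isUnit, ← coe_vecMulLinear, ← LinearMap.ker_eq_bot,
    LinearMap.ker_eq_bot']
  intro f hf
  suffices ∀ c, f c = 0 from funext this
  intro c
  induction c using WellFoundedLT.induction with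
  | _ c ih =>
    have hc : ∑ a, f a * zetaMatrix K P a c = 0 := congrFun hf c
    rwa [Finset.sum_eq_single c (fun a _ hac => ?_) (by simp), zetaMatrix, of_apply,
      if_pos le_rfl, mul_one] at hc
    by_cases hle : a ≤ c
    · rw [ih a (lt_of_le_of_ne hle hac), zero_mul]
    · simp [zetaMatrix, hle]

theorem of_wvec_eq_mul (P P' : PartialOrder Q) :
    of (wvec K P P') = (zetaMatrix K P')ᵀ * zetaMatrix K P := by
  ext x c
  simp only [wvec, zetaMatrix, mul_apply, transpose_apply, of_apply, ite_zero_mul_ite_zero,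
    mul_one]

theorem Phi_apply_eq_mul (P P' : PartialOrder Q) (v : (Q × Fin 2 × Q) → K) (c : Q) (i : Fin 2)
    (d : Q) : Phi K P P' v (c, i, d) =
      ((of (wvec K P P'))ᵀ * of (fun x y => v (x, i, y)) * of (wvec K P P')) c d := by
  simp only [Phi, mul_apply, transpose_apply, of_apply, Finset.sum_mul]
  rw [Finset.sum_comm]
  exact Finset.sum_congr rfl fun x _ => Finset.sum_congr rfl fun y _ => by ring

noncomputable def phiLinearMap (P P' : PartialOrder Q) :
    ((Q × Fin 2 × Q) → K) →ₗ[K] ((Q × Fin 2 × Q) → K) where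
  toFun := Phi K P P'
  map_add' u v := by funext p; simp [Phi, add_mul, Finset.sum_add_distrib]
  map_smul' c v := by funext p; simp [Phi, Finset.mul_sum, mul_assoc]

@[simp]
theorem phiLinearMap_apply (P P' : PartialOrder Q) (v : (Q × Fin 2 × Q) → K) :
    phiLinearMap P P' v = Phi K P P' v :=
  rfl

theorem Phi_injective (P P' : PartialOrder Q) : Function.Injective (Phi K P P') := by
  have hW : IsUnit (of (wvec K P P')) := by
    rw [of_wvec_eq_mul]
    exact ((isUnit_transpose _).mpr (isUnit_zetaMatrix P')).mul (isUnit_zetaMatrix P)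
  change Function.Injective (phiLinearMap P P')
  rw [← LinearMap.ker_eq_bot, LinearMap.ker_eq_bot']
  rintro v hv
  funext ⟨x, i, y⟩
  have hslice : (of (wvec K P P'))ᵀ * of (fun x y => v (x, i, y)) * of (wvec K P P') = 0 := by
    ext c d
    rw [← Phi_apply_eq_mul]
    exact congrFun hv (c, i, d)
  rw [hW.mul_left_eq_zero, ((isUnit_transpose _).mpr hW).mul_right_eq_zero] at hslice
  exact congrFun₂ hslice x y

end Zeta

section Form

variable {K : Type*} [Field K] {Q : Type*} [Fintype Q]

noncomputable def bformLeft (v : (Q × Fin 2 × Q) → K) : ((Q × Fin 2 × Q) → K) →ₗ[K] K where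
  toFun r := bform r v
  map_add' r s := by
    simp only [bform, Pi.add_apply, ← Finset.sum_add_distrib]
    exact Finset.sum_congr rfl fun _ _ => Finset.sum_congr rfl fun _ _ => by ring
  map_smul' c r := by simp [bform, Finset.mul_sum, mul_sub, mul_assoc]

theorem bform_sub_left (r s v : (Q × Fin 2 × Q) → K) :
    bform (r - s) v = bform r v - bform s v :=
  map_sub (bformLeft v) r s

theorem mem_annih_span_iff {s : Set ((Q × Fin 2 × Q) → K)} {v : (Q × Fin 2 × Q) → K} :
    v ∈ annih K Q (Submodule.span K s) ↔ ∀ r ∈ s, bform r v = 0 :=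
  Submodule.span_le (p := LinearMap.ker (bformLeft v))

theorem bform_e_left (a : Q) (j : Fin 2) (b : Q) (v : (Q × Fin 2 × Q) → K) :
    bform (e K a j b) v = (if j = 0 then 1 else -1) * v (a, j, b) := by
  fin_cases j <;> simp [bform, e, Prod.ext_iff, ite_and, Finset.sum_ite_eq']

theorem Phi_e_apply (P P' : PartialOrder Q) (x : Q) (i : Fin 2) (y c : Q) (j : Fin 2) (d : Q) :
    Phi K P P' (e K x i y) (c, j, d) =
      if j = i then wvec K P P' x c * wvec K P P' y d else 0 := by
  by_cases hji : j = i
  · simp [Phi, e, hji, Prod.ext_iff, ite_and, Finset.sum_ite_eq']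
  · simp [Phi, e, hji, Prod.ext_iff]

end Form

section ComplementaryForests

variable {K : Type*} [Field K] {Q : Type*} [Fintype Q] {P P' : PartialOrder Q}
  (hP : IsForestOrder P) (hP' : IsForestOrder P')
  (hdisj : ∀ a b, (P.le a b ∨ P.le b a) → (P'.le a b ∨ P'.le b a) → a = b)
include hP hP' hdisj

theorem wvec_eq_ite (x c : Q) :
    wvec K P P' x c = if ∃ t, P'.le t x ∧ P.le t c then 1 else 0 := by
  unfold wvec
  split_ifs with hex
  · obtain ⟨t, htx, htc⟩ := hex
    have hunique : ∀ s, s ≠ t → ¬(P'.le s x ∧ P.le s c) := fun s hst hs =>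
      hst (hdisj s t (hP s t c hs.2 htc) (hP' s t x hs.1 htx))
    rw [Finset.sum_eq_single t (fun s _ hst => if_neg (hunique s hst)) (by simp),
      if_pos ⟨htx, htc⟩]
  · exact Finset.sum_eq_zero fun s _ => if_neg fun hs => hex ⟨s, hs⟩

theorem wvec_mul_wvec {a b x y : Q} (hab : P.le a b ∨ P.le b a) (hxy : P'.le x y ∨ P'.le y x) :
    wvec K P P' x a * wvec K P P' y b =
      if ∃ t, P.le t (pminP P a b) ∧ P'.le t (pminP P' x y) then 1 else 0 := by
  simp only [le_pminP_iff hab, le_pminP_iff hxy, wvec_eq_ite hP hP' hdisj]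
  by_cases hs : ∃ s, P'.le s x ∧ P.le s a
  · by_cases ht : ∃ t, P'.le t y ∧ P.le t b
    · obtain ⟨s, hsx, hsa⟩ := hs
      obtain ⟨t, hty, htb⟩ := ht
      obtain rfl : s = t := hdisj s t (hP.comparable_of_le_of_le hab hsa htb)
        (hP'.comparable_of_le_of_le hxy hsx hty)
      rw [if_pos ⟨s, hsx, hsa⟩, if_pos ⟨s, hty, htb⟩, if_pos ⟨s, ⟨hsa, htb⟩, hsx, hty⟩, one_mul]
    · rw [if_neg ht, mul_zero, if_neg fun ⟨t, ⟨_, htb⟩, _, hty⟩ => ht ⟨t, hty, htb⟩]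
  · rw [if_neg hs, zero_mul, if_neg fun ⟨t, ⟨hta, _⟩, htx, _⟩ => hs ⟨t, htx, hta⟩]

end ComplementaryForests

section Relations

variable {K : Type*} [Field K] {Q : Type*} [Fintype Q] {P P' : PartialOrder Q}

theorem Phi_mem_annih_relSpaceP (hP : IsForestOrder P) (hP' : IsForestOrder P')
    (hdisj : ∀ a b, (P.le a b ∨ P.le b a) → (P'.le a b ∨ P'.le b a) → a = b)
    {r' : (Q × Fin 2 × Q) → K} (hr' : r' ∈ relSpaceP K P') :
    Phi K P P' r' ∈ annih K Q (relSpaceP K P) := by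
  change r' ∈ (annih K Q (relSpaceP K P)).comap (phiLinearMap P P')
  refine (Submodule.span_le.mpr ?_) hr'
  rintro _ ⟨x, y, hxy, hr'⟩
  rw [SetLike.mem_coe, Submodule.mem_comap, relSpaceP, mem_annih_span_iff]
  rintro _ ⟨a, b, hab, hr⟩
  have hmin : P.le (pminP P a b) (pminP P a b) ∨ P.le (pminP P a b) (pminP P a b) :=
    Or.inl (P.le_refl _)
  have hmin' : P'.le (pminP P' x y) (pminP P' x y) ∨ P'.le (pminP P' x y) (pminP P' x y) :=
    Or.inl (P'.le_refl _)
  rcases hr with rfl | rfl <;> rcases hr' with rfl | rfl <;>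
    simp only [bform_sub_left, bform_e_left, map_sub, Pi.sub_apply, phiLinearMap_apply] <;>
    simp [Phi_e_apply, wvec_mul_wvec hP hP' hdisj hab hxy, wvec_mul_wvec hP hP' hdisj hmin hxy,
      wvec_mul_wvec hP hP' hdisj hab hmin', wvec_mul_wvec hP hP' hdisj hmin hmin', pminP_self] <;>
    split_ifs <;> ring

theorem add_eq_zero_of_mem_annih_relSpaceP {v : (Q × Fin 2 × Q) → K}
    (hv : v ∈ annih K Q (relSpaceP K P)) {a b : Q} (hab : P.le a b ∨ P.le b a) :
    v (a, 0, b) + v (pminP P a b, 1, pminP P a b) = 0 ∧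
      v (pminP P a b, 0, pminP P a b) + v (a, 1, b) = 0 := by
  rw [relSpaceP, mem_annih_span_iff] at hv
  have h0 := hv _ ⟨a, b, hab, Or.inl rfl⟩
  have h1 := hv _ ⟨a, b, hab, Or.inr rfl⟩
  simp only [bform_sub_left, bform_e_left] at h0 h1
  norm_num at h0 h1
  exact ⟨h0, h1⟩

theorem eq_zero_of_mem_annih_of_eq_zero_on_annihCoords {v : (Q × Fin 2 × Q) → K}
    (hv : v ∈ annih K Q (relSpaceP K P)) (h0 : ∀ p ∈ annihCoords P, v p = 0) : v = 0 := by
  funext ⟨a, i, b⟩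
  by_cases hab : P.le a b ∨ P.le b a
  · obtain ⟨hab0, hab1⟩ := add_eq_zero_of_mem_annih_relSpaceP hv hab
    set m := pminP P a b
    have hm0 : v (m, 0, m) = 0 := h0 _ (Or.inr ⟨rfl, rfl⟩)
    have hm1 : v (m, 1, m) = 0 := by
      simpa [pminP_self, hm0] using (add_eq_zero_of_mem_annih_relSpaceP hv (Or.inl (P.le_refl m))).2
    fin_cases i
    · simpa [hm1] using hab0
    · simpa [hm0] using hab1
  · exact h0 _ (Or.inl hab)

theorem map_funLeft_relSpaceP_eq_top
    (hcover : ∀ a b, ¬(P.le a b ∨ P.le b a) → P'.le a b ∨ P'.le b a) :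
    (relSpaceP K P').map (LinearMap.funLeft K K (Subtype.val : annihCoords P → _)) = ⊤ := by
  set ρ := LinearMap.funLeft K K (Subtype.val : annihCoords P → Q × Fin 2 × Q)
  have hgen : ∀ {x y : Q}, (P'.le x y ∨ P'.le y x) → ∀ r,
      (r = e K x 0 y - e K (pminP P' x y) 1 (pminP P' x y) ∨
        r = e K (pminP P' x y) 0 (pminP P' x y) - e K x 1 y) →
      ρ r ∈ (relSpaceP K P').map ρ := fun hxy r hr =>
    Submodule.mem_map_of_mem (Submodule.subset_span ⟨_, _, hxy, hr⟩)
  have hdiag1 : ∀ m, (m, 1, m) ∉ annihCoords P := by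
    simp [annihCoords, P.le_refl]
  have hdiag : ∀ m (hm : (m, 0, m) ∈ annihCoords P),
      Pi.single ⟨(m, 0, m), hm⟩ 1 ∈ (relSpaceP K P').map ρ := by
    intro m hm
    have := hgen (Or.inl (P'.le_refl m)) _ (Or.inl rfl)
    rwa [pminP_self, map_sub, funLeft_val_e_of_mem hm, funLeft_val_e_of_not_mem (hdiag1 m),
      sub_zero] at this
  rw [eq_top_iff, ← (Pi.basisFun K (annihCoords P)).span_eq, Submodule.span_le]
  rintro _ ⟨⟨⟨a, i, b⟩, hs⟩, rfl⟩
  rw [Pi.basisFun_apply]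
  obtain hinc | ⟨rfl, rfl⟩ : ¬(P.le a b ∨ P.le b a) ∨ (a = b ∧ i = 0) := id hs
  · have hxy := hcover a b hinc
    obtain rfl | rfl : i = 0 ∨ i = 1 := by omega
    · have := hgen hxy _ (Or.inl rfl)
      rwa [map_sub, funLeft_val_e_of_mem hs, funLeft_val_e_of_not_mem (hdiag1 _), sub_zero]
        at this
    · have hn : (pminP P' a b, 0, pminP P' a b) ∈ annihCoords P := Or.inr ⟨rfl, rfl⟩
      have := Submodule.sub_mem _ (hdiag _ hn) (hgen hxy _ (Or.inr rfl))
      rwa [map_sub, funLeft_val_e_of_mem hn, funLeft_val_e_of_mem hs, sub_sub_cancel] at this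
  · exact hdiag a hs

theorem finrank_annih_relSpaceP_le
    (hcover : ∀ a b, ¬(P.le a b ∨ P.le b a) → P'.le a b ∨ P'.le b a) :
    Module.finrank K (annih K Q (relSpaceP K P)) ≤ Module.finrank K (relSpaceP K P') := by
  set ρ := LinearMap.funLeft K K (Subtype.val : annihCoords P → Q × Fin 2 × Q)
  have hinj : Function.Injective (ρ ∘ₗ (annih K Q (relSpaceP K P)).subtype) := by
    rw [← LinearMap.ker_eq_bot, LinearMap.ker_eq_bot']
    intro v hv
    exact Subtype.ext (eq_zero_of_mem_annih_of_eq_zero_on_annihCoords v.2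
      fun p hp => congrFun hv ⟨p, hp⟩)
  calc Module.finrank K (annih K Q (relSpaceP K P))
      ≤ Module.finrank K (annihCoords P → K) := LinearMap.finrank_le_finrank_of_injective hinj
    _ = Module.finrank K ((relSpaceP K P').map ρ) := by
      rw [map_funLeft_relSpaceP_eq_top hcover, finrank_top]
    _ ≤ Module.finrank K (relSpaceP K P') := Submodule.finrank_map_le ρ _

end Relations

theorem Phi_automorphism_maps_relations_to_dual_relations_general {K Q : Type*}
    [Field K] [Fintype Q] (P P' : PartialOrder Q)
    (hP : IsForestOrder P) (hP' : IsForestOrder P')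
    (h : ∀ a b : Q, a ≠ b → ((P.le a b ∨ P.le b a) ↔ ¬ (P'.le a b ∨ P'.le b a))) :
    IsLinearMap K (Phi K P P') ∧ Function.Bijective (Phi K P P') ∧
    Set.BijOn (Phi K P P') (relSpaceP K P' : Set ((Q × Fin 2 × Q) → K))
      (annih K Q (relSpaceP K P) : Set ((Q × Fin 2 × Q) → K)) := by
  have hdisj : ∀ a b, (P.le a b ∨ P.le b a) → (P'.le a b ∨ P'.le b a) → a = b :=
    fun a b hab hab' => by_contra fun hne => (h a b hne).mp hab hab'
  have hcover : ∀ a b, ¬(P.le a b ∨ P.le b a) → P'.le a b ∨ P'.le b a := fun a b hab =>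
    have hne : a ≠ b := by rintro rfl; exact hab (Or.inl (P.le_refl a))
    not_not.mp fun hab' => hab ((h a b hne).mpr hab')
  have hinj : Function.Injective (phiLinearMap (K := K) P P') := Phi_injective P P'
  have hmap : (relSpaceP K P').map (phiLinearMap P P') = annih K Q (relSpaceP K P) := by
    refine Submodule.eq_of_le_of_finrank_le ?_ ?_
    · rintro _ ⟨r, hr, rfl⟩
      exact Phi_mem_annih_relSpaceP hP hP' hdisj hr
    · rw [(Submodule.equivMapOfInjective _ hinj _).finrank_eq.symm]
      exact finrank_annih_relSpaceP_le hcover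
  refine ⟨(phiLinearMap P P').isLinear, ⟨hinj, LinearMap.injective_iff_surjective.mp hinj⟩, ?_⟩
  rw [← hmap, Submodule.map_coe]
  exact hinj.injOn.bijOn_image

/-- Let `≼` and `≼'` be two forest-poset orders on a finite set `Q` such that distinct
elements are `≼`-comparable exactly when they are `≼'`-incomparable (as for a thin
forest poset and its dual).  Then `Φ` is a linear automorphism of `V` and maps the
relation space `R_(Q,≼')` bijectively onto the annihilator `R_(Q,≼)^⊥` (the space of
relations of the Koszul dual `As(Q,≼)^!`). -/
theorem Phi_automorphism_maps_relations_to_dual_relations {K Q : Type*}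
    [Field K] [CharZero K] [Fintype Q] (P P' : PartialOrder Q)
    (hP : IsForestOrder P) (hP' : IsForestOrder P')
    (h : ∀ a b : Q, a ≠ b → ((P.le a b ∨ P.le b a) ↔ ¬ (P'.le a b ∨ P'.le b a))) :
    IsLinearMap K (Phi K P P') ∧ Function.Bijective (Phi K P P') ∧
    Set.BijOn (Phi K P P') (relSpaceP K P' : Set ((Q × Fin 2 × Q) → K))
      (annih K Q (relSpaceP K P) : Set ((Q × Fin 2 × Q) → K)) :=
  Phi_automorphism_maps_relations_to_dual_relations_general P P' hP hP' h
end
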